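/- arXiv:1909.06078 — 5 statements merged into one kernel-verified Lean document; each statement's English description precedes it below -/
import Mathlib

section
/- If f is a smooth positive function on (0,∞) with ‖f‖_{P₀^α(a,b)} ≤ ε₀ for some ε₀ > 0, then there exists c₀ > 0 such that c₀ x^α e^{−ε₀} ≤ f(x) ≤ c₀ x^α e^{ε₀} for all x ∈ [a,b]; moreover if ε₀ < 1 then sup_{x∈[a,b]} |(f(x) − c₀ x^α)/f(x)| < 2ε₀. -/
open MeasureTheory Set Real Topology Filter

theorem quasi_power_law_consequence (f : ℝ → ℝ) (α a b ε₀ : ℝ)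
    (ha : 0 < a) (hab : a < b) (hε : 0 < ε₀)
    (hf : ContDiffOn ℝ (⊤ : ℕ∞) f (Set.Ioi 0)) (hfpos : ∀ x > (0:ℝ), 0 < f x)
    (hgauge : (⨆ a' ∈ Set.Ioo a b, ⨆ b' ∈ Set.Ioo a b,
        |∫ t in a'..b', (t * deriv f t / f t - α) / t|) ≤ ε₀) :
    ∃ c₀ > (0:ℝ),
      (∀ x ∈ Set.Icc a b,
          c₀ * x ^ α * Real.exp (-ε₀) ≤ f x ∧ f x ≤ c₀ * x ^ α * Real.exp ε₀) ∧
      (ε₀ < 1 → ∀ x ∈ Set.Icc a b, |(f x - c₀ * x ^ α) / f x| < 2 * ε₀) := by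
  -- the auxiliary function g = log f - α log
  set g : ℝ → ℝ := fun t => Real.log (f t) - α * Real.log t with hg
  have hIccpos : Set.Icc a b ⊆ Set.Ioi 0 := fun x hx => lt_of_lt_of_le ha hx.1
  have hdf : ∀ t > (0:ℝ), HasDerivAt f (deriv f t) t := by
    intro t ht
    exact ((hf.differentiableOn (by simp)).differentiableAt
      (isOpen_Ioi.mem_nhds ht)).hasDerivAt
  have hgder : ∀ t > (0:ℝ), HasDerivAt g (deriv f t / f t - α / t) t := by
    intro t ht
    have h1 : HasDerivAt (fun s => Real.log (f s)) (deriv f t / f t) t :=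
      (hdf t ht).log (hfpos t ht).ne'
    have h2 : HasDerivAt (fun s => α * Real.log s) (α * t⁻¹) t :=
      (Real.hasDerivAt_log ht.ne').const_mul α
    have h3 := h1.sub h2
    rw [div_eq_mul_inv α t]; exact h3
  have hgcont : ContinuousOn g (Set.Ioi 0) := by
    refine ContinuousOn.sub ?_ ?_
    · exact ContinuousOn.log (hf.continuousOn) fun t ht => (hfpos t ht).ne'
    · exact continuousOn_const.mul (Real.continuousOn_log.mono fun t ht => ne_of_gt ht)
  -- integral computation
  have hint : ∀ a' ∈ Set.Ioo a b, ∀ b' ∈ Set.Ioo a b,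
      (∫ t in a'..b', (t * deriv f t / f t - α) / t) = g b' - g a' := by
    intro a' ha' b' hb'
    have hsub : Set.uIcc a' b' ⊆ Set.Ioi 0 := fun t ht =>
      lt_of_lt_of_le (lt_min (lt_trans ha ha'.1) (lt_trans ha hb'.1)) ht.1
    have hcontd : ContinuousOn (fun t => (t * deriv f t / f t - α) / t) (Set.uIcc a' b') := by
      have hd : ContinuousOn (deriv f) (Set.Ioi 0) :=
        hf.continuousOn_deriv_of_isOpen isOpen_Ioi (by simp)
      apply ContinuousOn.div
      · apply ContinuousOn.sub _ continuousOn_const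
        apply ContinuousOn.div
        · exact (continuousOn_id.mul (hd.mono hsub))
        · exact hf.continuousOn.mono hsub
        · exact fun t ht => (hfpos t (hsub ht)).ne'
      · exact continuousOn_id
      · exact fun t ht => ne_of_gt (hsub ht)
    refine intervalIntegral.integral_eq_sub_of_hasDerivAt (fun t ht => ?_)
      (hcontd.intervalIntegrable)
    have ht0 : (0:ℝ) < t := hsub ht
    have h4 := hgder t ht0
    refine h4.congr_deriv ?_
    have hfne : f t ≠ 0 := (hfpos t ht0).ne'
    rw [eq_comm, sub_div, mul_div_assoc, mul_div_cancel_left₀ _ ht0.ne']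
  -- pointwise bound from the gauge
  have hosc : ∀ a' ∈ Set.Ioo a b, ∀ b' ∈ Set.Ioo a b, |g b' - g a'| ≤ ε₀ := by
    intro a' ha' b' hb'
    -- the family is bounded since g is continuous on the compact Icc
    obtain ⟨M, hM⟩ := (isCompact_Icc.image_of_continuousOn
      (hgcont.mono hIccpos)).isBounded.subset_closedBall 0
    have hb : ∀ x ∈ Set.Icc a b, ∀ y ∈ Set.Icc a b, |g y - g x| ≤ 2 * M := by
      intro x hx y hy
      have h1 : |g x| ≤ M := by
        have := hM ⟨x, hx, rfl⟩
        simpa [Real.dist_eq] using this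
      have h2 : |g y| ≤ M := by
        have := hM ⟨y, hy, rfl⟩
        simpa [Real.dist_eq] using this
      calc |g y - g x| ≤ |g y| + |g x| := abs_sub _ _
        _ ≤ 2 * M := by linarith
    have hMnn : (0:ℝ) ≤ 2 * M :=
      le_trans (abs_nonneg _) (hb a ⟨le_refl a, hab.le⟩ a ⟨le_refl a, hab.le⟩)
    set F : ℝ → ℝ → ℝ := fun x y => |∫ t in x..y, (t * deriv f t / f t - α) / t| with hF
    have hFb : ∀ x ∈ Set.Ioo a b, ∀ y ∈ Set.Ioo a b, F x y ≤ 2 * M := by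
      intro x hx y hy
      rw [hF]; simp only
      rw [hint x hx y hy]
      exact hb x (Set.Ioo_subset_Icc_self hx) y (Set.Ioo_subset_Icc_self hy)
    have step1 : F a' b' ≤ ⨆ _ : b' ∈ Set.Ioo a b, F a' b' :=
      le_ciSup (f := fun _ : b' ∈ Set.Ioo a b => F a' b')
        ⟨2 * M, by rintro v ⟨h, rfl⟩; exact hFb a' ha' b' hb'⟩ hb'
    have step2 : (⨆ _ : b' ∈ Set.Ioo a b, F a' b') ≤
        ⨆ y, ⨆ _ : y ∈ Set.Ioo a b, F a' y := by
      refine le_ciSup (f := fun y => ⨆ _ : y ∈ Set.Ioo a b, F a' y) ?_ b'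
      refine ⟨2 * M, ?_⟩
      rintro v ⟨y, rfl⟩
      exact Real.iSup_le (fun hy => hFb a' ha' y hy) hMnn
    have step3 : (⨆ y, ⨆ _ : y ∈ Set.Ioo a b, F a' y) ≤
        ⨆ _ : a' ∈ Set.Ioo a b, ⨆ y, ⨆ _ : y ∈ Set.Ioo a b, F a' y := by
      refine le_ciSup (f := fun _ : a' ∈ Set.Ioo a b =>
        ⨆ y, ⨆ _ : y ∈ Set.Ioo a b, F a' y) ?_ ha'
      refine ⟨2 * M, ?_⟩
      rintro v ⟨h, rfl⟩
      exact Real.iSup_le (fun y => Real.iSup_le (fun hy => hFb a' ha' y hy) hMnn) hMnn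
    have step4 : (⨆ _ : a' ∈ Set.Ioo a b, ⨆ y, ⨆ _ : y ∈ Set.Ioo a b, F a' y) ≤
        ⨆ x, ⨆ _ : x ∈ Set.Ioo a b, ⨆ y, ⨆ _ : y ∈ Set.Ioo a b, F x y := by
      refine le_ciSup (f := fun x => ⨆ _ : x ∈ Set.Ioo a b,
        ⨆ y, ⨆ _ : y ∈ Set.Ioo a b, F x y) ?_ a'
      refine ⟨2 * M, ?_⟩
      rintro v ⟨x, rfl⟩
      exact Real.iSup_le (fun hx => Real.iSup_le
        (fun y => Real.iSup_le (fun hy => hFb x hx y hy) hMnn) hMnn) hMnn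
    have := (((step1.trans step2).trans step3).trans step4).trans hgauge
    rw [← hint a' ha' b' hb']
    exact this
  -- choose the reference point
  set m : ℝ := (a + b) / 2 with hm
  have hmIoo : m ∈ Set.Ioo a b := ⟨by rw [hm]; linarith, by rw [hm]; linarith⟩
  -- bound on all of Icc by continuity
  have hbnd : ∀ x ∈ Set.Icc a b, |g x - g m| ≤ ε₀ := by
    intro x hx
    have hxcl : x ∈ closure (Set.Ioo a b) := by
      rw [closure_Ioo hab.ne]; exact hx
    have hne : (nhdsWithin x (Set.Ioo a b)).NeBot := mem_closure_iff_nhdsWithin_neBot.mp hxcl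
    have hcont : ContinuousAt (fun y => |g y - g m|) x := by
      have hcg : ContinuousAt g x := hgcont.continuousAt (isOpen_Ioi.mem_nhds (hIccpos hx))
      exact (hcg.sub continuousAt_const).abs
    refine le_of_tendsto (f := fun y => |g y - g m|) (x := nhdsWithin x (Set.Ioo a b))
      (hcont.continuousWithinAt.tendsto) ?_
    filter_upwards [self_mem_nhdsWithin] with y hy
    exact hosc m hmIoo y hy
  -- representation of f
  have hfx : ∀ x ∈ Set.Icc a b, f x = x ^ α * Real.exp (g x) := by
    intro x hx
    have hx0 : (0:ℝ) < x := hIccpos hx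
    have hxa : (0:ℝ) < x ^ α := Real.rpow_pos_of_pos hx0 α
    have h1 : Real.exp (g x) = f x / x ^ α := by
      have hgx : g x = Real.log (f x) - α * Real.log x := by rw [hg]
      rw [hgx, Real.exp_sub, Real.exp_log (hfpos x hx0), ← Real.log_rpow hx0,
        Real.exp_log hxa]
    rw [h1, mul_comm, div_mul_cancel₀ _ hxa.ne']
  clear_value g m
  clear hg hm
  -- the constant
  refine ⟨Real.exp (g m), Real.exp_pos _, ?_, ?_⟩
  · intro x hx
    have hx0 : (0:ℝ) < x := hIccpos hx
    have hxa : (0:ℝ) < x ^ α := Real.rpow_pos_of_pos hx0 α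
    have habs := abs_le.mp (hbnd x hx)
    constructor
    · rw [hfx x hx]
      have h1 : Real.exp (g m) * Real.exp (-ε₀) ≤ Real.exp (g x) := by
        rw [← Real.exp_add]
        exact Real.exp_le_exp.mpr (by linarith [habs.1])
      calc Real.exp (g m) * x ^ α * Real.exp (-ε₀)
          = x ^ α * (Real.exp (g m) * Real.exp (-ε₀)) := by ring
        _ ≤ x ^ α * Real.exp (g x) := mul_le_mul_of_nonneg_left h1 hxa.le
    · rw [hfx x hx]
      have h1 : Real.exp (g x) ≤ Real.exp (g m) * Real.exp ε₀ := by
        rw [← Real.exp_add]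
        exact Real.exp_le_exp.mpr (by linarith [habs.2])
      calc x ^ α * Real.exp (g x)
          ≤ x ^ α * (Real.exp (g m) * Real.exp ε₀) := mul_le_mul_of_nonneg_left h1 hxa.le
        _ = Real.exp (g m) * x ^ α * Real.exp ε₀ := by ring
  · intro hε1 x hx
    have hx0 : (0:ℝ) < x := hIccpos hx
    have hxa : (0:ℝ) < x ^ α := Real.rpow_pos_of_pos hx0 α
    have hkey : (f x - Real.exp (g m) * x ^ α) / f x = 1 - Real.exp (g m - g x) := by
      rw [Real.exp_sub, hfx x hx]
      have hA : Real.exp (g x) ≠ 0 := (Real.exp_pos _).ne'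
      field_simp
    rw [hkey]
    have hdb : |g m - g x| ≤ ε₀ := by rw [abs_sub_comm]; exact hbnd x hx
    set d : ℝ := g m - g x with hd
    rw [abs_sub_comm]
    rcases le_or_gt d 0 with hcase | hcase
    · have h1 : Real.exp d ≤ 1 := Real.exp_le_one_iff.mpr hcase
      rw [abs_of_nonpos (by linarith)]
      have h2 : Real.exp (-ε₀) ≤ Real.exp d := by
        refine Real.exp_le_exp.mpr ?_
        have := (abs_le.mp hdb).1
        linarith
      have h3 : 1 - ε₀ < Real.exp (-ε₀) := by
        have := Real.add_one_lt_exp (x := -ε₀) (by linarith)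
        linarith
      linarith
    · have h1 : 1 ≤ Real.exp d := Real.one_le_exp hcase.le
      rw [abs_of_nonneg (by linarith)]
      have h2 : Real.exp d ≤ Real.exp ε₀ :=
        Real.exp_le_exp.mpr (le_trans (le_abs_self d) hdb)
      have h3 := Real.exp_bound' hε.le hε1.le (n := 2) (by norm_num)
      norm_num [Finset.sum_range_succ, Nat.factorial] at h3
      nlinarith [mul_pos hε (show (0:ℝ) < 1 - ε₀ by linarith)]
end

section
/- For smooth positive functions f, g on (0,∞) with f > g on [a,b], one has ‖f−g‖_{P_i^α(a,b)} ≤ ‖f‖_{P_i^α(a,b)} · sup_{[a,b]} (f/(f−g)) + ‖g‖_{P_i^α(a,b)} · sup_{[a,b]} (g/(f−g)), where P_i denotes either the P₁ or P∞ power-law gauge. -/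
open MeasureTheory Set Real


lemma le_biSup_of_bddAbove {f : ℝ → ℝ} {s : Set ℝ} (hb : BddAbove (f '' s))
    {x : ℝ} (hx : x ∈ s) : f x ≤ ⨆ y ∈ s, f y := by
  obtain ⟨M, hM⟩ := hb
  have hbdd : BddAbove (Set.range fun y => ⨆ _ : y ∈ s, f y) := by
    refine ⟨max M 0, ?_⟩
    rintro _ ⟨y, rfl⟩
    exact Real.iSup_le (fun h => le_max_of_le_left (hM ⟨y, h, rfl⟩)) (le_max_right _ _)
  have h1 : f x = ⨆ _ : x ∈ s, f x := by
    haveI : Nonempty (x ∈ s) := ⟨hx⟩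
    exact ciSup_const.symm
  exact h1.trans_le (le_ciSup hbdd x)

theorem gauge_difference_bound (f g : ℝ → ℝ) (α a b : ℝ)
    (ha : 0 < a) (hab : a < b)
    (hf : ContDiffOn ℝ (⊤ : ℕ∞) f (Set.Ioi 0)) (hfpos : ∀ x > (0:ℝ), 0 < f x)
    (hg : ContDiffOn ℝ (⊤ : ℕ∞) g (Set.Ioi 0)) (hgpos : ∀ x > (0:ℝ), 0 < g x)
    (hfg : ∀ x ∈ Set.Icc a b, g x < f x) :
    (∫ x in a..b, |x * deriv (fun y => f y - g y) x / (f x - g x) - α| / x)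
      ≤ (∫ x in a..b, |x * deriv f x / f x - α| / x)
          * (⨆ x ∈ Set.Icc a b, f x / (f x - g x))
        + (∫ x in a..b, |x * deriv g x / g x - α| / x)
          * (⨆ x ∈ Set.Icc a b, g x / (f x - g x)) ∧
    (⨆ x ∈ Set.Icc a b, |x * deriv (fun y => f y - g y) x / (f x - g x) - α|)
      ≤ (⨆ x ∈ Set.Icc a b, |x * deriv f x / f x - α|)
          * (⨆ x ∈ Set.Icc a b, f x / (f x - g x))
        + (⨆ x ∈ Set.Icc a b, |x * deriv g x / g x - α|)
          * (⨆ x ∈ Set.Icc a b, g x / (f x - g x)) := by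
  have hab' : a ≤ b := hab.le
  have hsub : Set.Icc a b ⊆ Set.Ioi 0 := fun x hx => lt_of_lt_of_le ha hx.1
  have hxpos : ∀ x ∈ Set.Icc a b, (0:ℝ) < x := fun x hx => hsub hx
  have hhpos : ∀ x ∈ Set.Icc a b, 0 < f x - g x := fun x hx => sub_pos.2 (hfg x hx)
  have hne : a ∈ Set.Icc a b := ⟨le_rfl, hab'⟩
  have hdf : ContinuousOn (deriv f) (Set.Icc a b) :=
    (hf.continuousOn_deriv_of_isOpen isOpen_Ioi (by simp)).mono hsub
  have hdg : ContinuousOn (deriv g) (Set.Icc a b) :=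
    (hg.continuousOn_deriv_of_isOpen isOpen_Ioi (by simp)).mono hsub
  have hcf : ContinuousOn f (Set.Icc a b) := hf.continuousOn.mono hsub
  have hcg : ContinuousOn g (Set.Icc a b) := hg.continuousOn.mono hsub
  have hd : ∀ x ∈ Set.Icc a b, deriv (fun y => f y - g y) x = deriv f x - deriv g x := by
    intro x hx
    have hfd : DifferentiableAt ℝ f x :=
      (hf.contDiffAt (isOpen_Ioi.mem_nhds (hsub hx))).differentiableAt (by simp)
    have hgd : DifferentiableAt ℝ g x :=
      (hg.contDiffAt (isOpen_Ioi.mem_nhds (hsub hx))).differentiableAt (by simp)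
    exact deriv_fun_sub hfd hgd
  -- key pointwise bound
  have key : ∀ x ∈ Set.Icc a b,
      |x * deriv (fun y => f y - g y) x / (f x - g x) - α|
        ≤ |x * deriv f x / f x - α| * (f x / (f x - g x))
          + |x * deriv g x / g x - α| * (g x / (f x - g x)) := by
    intro x hx
    have hf0 : f x ≠ 0 := (hfpos x (hsub hx)).ne'
    have hg0 : g x ≠ 0 := (hgpos x (hsub hx)).ne'
    have hh0 : f x - g x ≠ 0 := (hhpos x hx).ne'
    have h1 : x * deriv (fun y => f y - g y) x / (f x - g x) - α
        = (x * deriv f x / f x - α) * (f x / (f x - g x))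
          - (x * deriv g x / g x - α) * (g x / (f x - g x)) := by
      rw [hd x hx]
      field_simp
      ring
    rw [h1]
    refine (abs_sub _ _).trans (le_of_eq ?_)
    rw [abs_mul, abs_mul, abs_of_pos (div_pos (hfpos x (hsub hx)) (hhpos x hx)),
        abs_of_pos (div_pos (hgpos x (hsub hx)) (hhpos x hx))]
  -- sup quantities
  have hFcont : ContinuousOn (fun x => f x / (f x - g x)) (Set.Icc a b) :=
    hcf.div (hcf.sub hcg) fun x hx => (hhpos x hx).ne'
  have hGcont : ContinuousOn (fun x => g x / (f x - g x)) (Set.Icc a b) :=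
    hcg.div (hcf.sub hcg) fun x hx => (hhpos x hx).ne'
  have hAcont : ContinuousOn (fun x => |x * deriv f x / f x - α|) (Set.Icc a b) :=
    (((continuousOn_id.mul hdf).div hcf fun x hx => (hfpos x (hsub hx)).ne').sub
      continuousOn_const).abs
  have hBcont : ContinuousOn (fun x => |x * deriv g x / g x - α|) (Set.Icc a b) :=
    (((continuousOn_id.mul hdg).div hcg fun x hx => (hgpos x (hsub hx)).ne').sub
      continuousOn_const).abs
  have hCcont : ContinuousOn
      (fun x => |x * deriv (fun y => f y - g y) x / (f x - g x) - α|) (Set.Icc a b) := by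
    have h0 : ContinuousOn (fun x => |x * (deriv f x - deriv g x) / (f x - g x) - α|)
        (Set.Icc a b) :=
      (((continuousOn_id.mul (hdf.sub hdg)).div (hcf.sub hcg)
        fun x hx => (hhpos x hx).ne').sub continuousOn_const).abs
    exact h0.congr fun x hx => by rw [hd x hx]
  have bddF : BddAbove ((fun x => f x / (f x - g x)) '' Set.Icc a b) :=
    (isCompact_Icc.image_of_continuousOn hFcont).bddAbove
  have bddG : BddAbove ((fun x => g x / (f x - g x)) '' Set.Icc a b) :=
    (isCompact_Icc.image_of_continuousOn hGcont).bddAbove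
  have bddA : BddAbove ((fun x => |x * deriv f x / f x - α|) '' Set.Icc a b) :=
    (isCompact_Icc.image_of_continuousOn hAcont).bddAbove
  have bddB : BddAbove ((fun x => |x * deriv g x / g x - α|) '' Set.Icc a b) :=
    (isCompact_Icc.image_of_continuousOn hBcont).bddAbove
  set Sf := ⨆ x ∈ Set.Icc a b, f x / (f x - g x) with hSfdef
  set Sg := ⨆ x ∈ Set.Icc a b, g x / (f x - g x) with hSgdef
  set MA := ⨆ x ∈ Set.Icc a b, |x * deriv f x / f x - α| with hMAdef
  set MB := ⨆ x ∈ Set.Icc a b, |x * deriv g x / g x - α| with hMBdef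
  have hFle : ∀ x ∈ Set.Icc a b, f x / (f x - g x) ≤ Sf := fun x hx => le_biSup_of_bddAbove bddF hx
  have hGle : ∀ x ∈ Set.Icc a b, g x / (f x - g x) ≤ Sg := fun x hx => le_biSup_of_bddAbove bddG hx
  have hAle : ∀ x ∈ Set.Icc a b, |x * deriv f x / f x - α| ≤ MA :=
    fun x hx => le_biSup_of_bddAbove bddA hx
  have hBle : ∀ x ∈ Set.Icc a b, |x * deriv g x / g x - α| ≤ MB :=
    fun x hx => le_biSup_of_bddAbove bddB hx
  have hSf0 : 0 ≤ Sf := le_trans (div_pos (hfpos a (hsub hne)) (hhpos a hne)).le (hFle a hne)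
  have hSg0 : 0 ≤ Sg := le_trans (div_pos (hgpos a (hsub hne)) (hhpos a hne)).le (hGle a hne)
  have hMA0 : 0 ≤ MA := le_trans (abs_nonneg _) (hAle a hne)
  have hMB0 : 0 ≤ MB := le_trans (abs_nonneg _) (hBle a hne)
  constructor
  · -- integral part
    have ptwise : ∀ x ∈ Set.Icc a b,
        |x * deriv (fun y => f y - g y) x / (f x - g x) - α| / x
          ≤ |x * deriv f x / f x - α| / x * Sf + |x * deriv g x / g x - α| / x * Sg := by
      intro x hx
      have hx0 := hxpos x hx
      have h1 : |x * deriv (fun y => f y - g y) x / (f x - g x) - α|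
          ≤ |x * deriv f x / f x - α| * Sf + |x * deriv g x / g x - α| * Sg :=
        (key x hx).trans (add_le_add
          (mul_le_mul_of_nonneg_left (hFle x hx) (abs_nonneg _))
          (mul_le_mul_of_nonneg_left (hGle x hx) (abs_nonneg _)))
      calc |x * deriv (fun y => f y - g y) x / (f x - g x) - α| / x
          ≤ (|x * deriv f x / f x - α| * Sf + |x * deriv g x / g x - α| * Sg) / x := by
            gcongr
        _ = |x * deriv f x / f x - α| / x * Sf + |x * deriv g x / g x - α| / x * Sg := by
            ring
    have intC : IntervalIntegrable
        (fun x => |x * deriv (fun y => f y - g y) x / (f x - g x) - α| / x) volume a b := by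
      apply ContinuousOn.intervalIntegrable
      rw [Set.uIcc_of_le hab']
      exact hCcont.div continuousOn_id fun x hx => (hxpos x hx).ne'
    have intA : IntervalIntegrable (fun x => |x * deriv f x / f x - α| / x * Sf) volume a b := by
      apply ContinuousOn.intervalIntegrable
      rw [Set.uIcc_of_le hab']
      exact (hAcont.div continuousOn_id fun x hx => (hxpos x hx).ne').mul continuousOn_const
    have intB : IntervalIntegrable (fun x => |x * deriv g x / g x - α| / x * Sg) volume a b := by
      apply ContinuousOn.intervalIntegrable
      rw [Set.uIcc_of_le hab']
      exact (hBcont.div continuousOn_id fun x hx => (hxpos x hx).ne').mul continuousOn_const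
    have hmono := intervalIntegral.integral_mono_on hab' intC (intA.add intB) ptwise
    rw [intervalIntegral.integral_add intA intB, intervalIntegral.integral_mul_const,
      intervalIntegral.integral_mul_const] at hmono
    exact hmono
  · -- sup part
    have hM0 : 0 ≤ MA * Sf + MB * Sg :=
      add_nonneg (mul_nonneg hMA0 hSf0) (mul_nonneg hMB0 hSg0)
    refine Real.iSup_le (fun x => Real.iSup_le (fun hx => ?_) hM0) hM0
    exact (key x hx).trans (add_le_add
      (mul_le_mul (hAle x hx) (hFle x hx)
        (div_pos (hfpos x (hsub hx)) (hhpos x hx)).le hMA0)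
      (mul_le_mul (hBle x hx) (hGle x hx)
        (div_pos (hgpos x (hsub hx)) (hhpos x hx)).le hMB0))
end

section
/- The three-dimensional Wiener-Khinchin kernel H₃(σ) = 1 − sin(2πσ)/(2πσ) satisfies (2/3)·(π²σ²)/(1+π²σ²) ≤ H₃(σ) ≤ 2·(π²σ²)/(1+π²σ²) for all σ ≥ 0. -/
open Real

private lemma aux_nonneg {f f' : ℝ → ℝ} (hd : ∀ x, HasDerivAt f (f' x) x)
    (h0 : f 0 = 0) (hf' : ∀ x, 0 ≤ x → 0 ≤ f' x) {x : ℝ} (hx : 0 ≤ x) : 0 ≤ f x := by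
  have hmono : MonotoneOn f (Set.Ici 0) := by
    apply monotoneOn_of_deriv_nonneg (convex_Ici 0)
    · exact fun y _ => (hd y).continuousAt.continuousWithinAt
    · exact fun y _ => (hd y).differentiableAt.differentiableWithinAt
    · intro y hy
      rw [(hd y).deriv]
      exact hf' y (le_of_lt (by simpa using hy))
  calc (0:ℝ) = f 0 := h0.symm
    _ ≤ f x := hmono (Set.self_mem_Ici) (Set.mem_Ici.2 hx) hx

private lemma sinA : ∀ x : ℝ, 0 ≤ x → x - x^3/6 ≤ Real.sin x := by
  intro x hx
  have := aux_nonneg (f := fun y => Real.sin y - (y - y^3/6))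
    (f' := fun y => Real.cos y - (1 - y^2/2)) (fun y => by
      have h2 : HasDerivAt (fun z:ℝ => z - z^3/6) (1 - y^2/2) y := by
        have := (hasDerivAt_id y).sub ((hasDerivAt_pow 3 y).div_const 6)
        exact this.congr_deriv (by push_cast; ring)
      exact (Real.hasDerivAt_sin y).sub h2)
    (by norm_num)
    (fun y _ => sub_nonneg.2 (Real.one_sub_sq_div_two_le_cos)) hx
  linarith

private lemma cosB : ∀ x : ℝ, 0 ≤ x → Real.cos x ≤ 1 - x^2/2 + x^4/24 := by
  intro x hx
  have := aux_nonneg (f := fun y => (1 - y^2/2 + y^4/24) - Real.cos y)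
    (f' := fun y => Real.sin y - (y - y^3/6)) (fun y => by
      have h2 : HasDerivAt (fun z:ℝ => 1 - z^2/2 + z^4/24) (-(y) + y^3/6) y := by
        have := (((hasDerivAt_const y (1:ℝ)).sub ((hasDerivAt_pow 2 y).div_const 2)).add
          ((hasDerivAt_pow 4 y).div_const 24))
        exact this.congr_deriv (by push_cast; ring)
      have := h2.sub (Real.hasDerivAt_cos y)
      exact this.congr_deriv (by ring))
    (by norm_num)
    (fun y hy => sub_nonneg.2 (sinA y hy)) hx
  linarith

private lemma sinC : ∀ x : ℝ, 0 ≤ x → Real.sin x ≤ x - x^3/6 + x^5/120 := by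
  intro x hx
  have := aux_nonneg (f := fun y => (y - y^3/6 + y^5/120) - Real.sin y)
    (f' := fun y => (1 - y^2/2 + y^4/24) - Real.cos y) (fun y => by
      have h2 : HasDerivAt (fun z:ℝ => z - z^3/6 + z^5/120) (1 - y^2/2 + y^4/24) y := by
        have := (((hasDerivAt_id y).sub ((hasDerivAt_pow 3 y).div_const 6)).add
          ((hasDerivAt_pow 5 y).div_const 120))
        exact this.congr_deriv (by push_cast; ring)
      exact h2.sub (Real.hasDerivAt_sin y))
    (by norm_num)
    (fun y hy => sub_nonneg.2 (cosB y hy)) hx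
  linarith

private lemma cosD : ∀ x : ℝ, 0 ≤ x → 1 - x^2/2 + x^4/24 - x^6/720 ≤ Real.cos x := by
  intro x hx
  have := aux_nonneg (f := fun y => Real.cos y - (1 - y^2/2 + y^4/24 - y^6/720))
    (f' := fun y => (y - y^3/6 + y^5/120) - Real.sin y) (fun y => by
      have h2 : HasDerivAt (fun z:ℝ => 1 - z^2/2 + z^4/24 - z^6/720)
          (-(y) + y^3/6 - y^5/120) y := by
        have := ((((hasDerivAt_const y (1:ℝ)).sub ((hasDerivAt_pow 2 y).div_const 2)).add
          ((hasDerivAt_pow 4 y).div_const 24)).sub ((hasDerivAt_pow 6 y).div_const 720))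
        exact this.congr_deriv (by push_cast; ring)
      have := (Real.hasDerivAt_cos y).sub h2
      exact this.congr_deriv (by ring))
    (by norm_num)
    (fun y hy => sub_nonneg.2 (sinC y hy)) hx
  linarith

private lemma sinE : ∀ x : ℝ, 0 ≤ x → x - x^3/6 + x^5/120 - x^7/5040 ≤ Real.sin x := by
  intro x hx
  have := aux_nonneg (f := fun y => Real.sin y - (y - y^3/6 + y^5/120 - y^7/5040))
    (f' := fun y => Real.cos y - (1 - y^2/2 + y^4/24 - y^6/720)) (fun y => by
      have h2 : HasDerivAt (fun z:ℝ => z - z^3/6 + z^5/120 - z^7/5040)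
          (1 - y^2/2 + y^4/24 - y^6/720) y := by
        have := ((((hasDerivAt_id y).sub ((hasDerivAt_pow 3 y).div_const 6)).add
          ((hasDerivAt_pow 5 y).div_const 120)).sub ((hasDerivAt_pow 7 y).div_const 5040))
        exact this.congr_deriv (by push_cast; ring)
      exact (Real.hasDerivAt_sin y).sub h2)
    (by norm_num)
    (fun y hy => sub_nonneg.2 (cosD y hy)) hx
  linarith

/-- The 3-dimensional Wiener–Khinchin kernel `H₃(σ) = 1 − sin(2πσ)/(2πσ)`,
extended by `H₃(0) = 0`. -/
noncomputable def H₃ (σ : ℝ) : ℝ :=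
  if σ = 0 then 0 else 1 - Real.sin (2 * π * σ) / (2 * π * σ)

theorem H3_rough_bounds :
    ∀ σ ≥ (0:ℝ),
      (2/3) * (π ^ 2 * σ ^ 2 / (1 + π ^ 2 * σ ^ 2)) ≤ H₃ σ ∧
      H₃ σ ≤ 2 * (π ^ 2 * σ ^ 2 / (1 + π ^ 2 * σ ^ 2)) := by
  intro σ hσ
  rcases eq_or_lt_of_le hσ with h0 | h0
  · simp [H₃, ← h0]
  · have hπ := Real.pi_pos
    set x : ℝ := 2 * π * σ with hxdef
    have hx : 0 < x := by positivity
    have hxne : σ ≠ 0 := ne_of_gt h0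
    have hH : H₃ σ = 1 - Real.sin x / x := by simp [H₃, hxne, hxdef]
    have hsq : π ^ 2 * σ ^ 2 = x ^ 2 / 4 := by rw [hxdef]; ring
    have hden : (0:ℝ) < 1 + x ^ 2 / 4 := by positivity
    clear_value x
    rw [hH, hsq]
    constructor
    · -- lower bound: (2/3) * (x²/4)/(1+x²/4) ≤ 1 - sin x / x
      have key : (2/3) * (x^2/4) ≤ (1 - Real.sin x / x) * (1 + x^2/4) := by
        have h1 : (1 - Real.sin x / x) * (1 + x^2/4) =
            ((x - Real.sin x) * (4 + x^2)) / (4 * x) := by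
          have hs : Real.sin x / x * x = Real.sin x := div_mul_cancel₀ _ hx.ne'
          rw [eq_div_iff (by positivity : (4*x:ℝ) ≠ 0)]
          linear_combination (-(4:ℝ) - x^2) * hs
        rw [h1, le_div_iff₀ (by positivity)]
        rcases le_or_gt x 4 with h4 | h4
        · have hsin := sinC x hx.le
          have h16 : (0:ℝ) ≤ 16 - x^2 := by nlinarith
          nlinarith [mul_nonneg (sub_nonneg.2 hsin) (by positivity : (0:ℝ) ≤ 4 + x^2),
            mul_nonneg (pow_nonneg hx.le 5) h16, pow_nonneg hx.le 3, pow_nonneg hx.le 5]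
        · have hs := Real.sin_le_one x
          nlinarith [sq_nonneg x, pow_pos hx 3]
      rw [show (2:ℝ)/3 * (x^2/4/(1+x^2/4)) = (2/3*(x^2/4))/(1+x^2/4) by ring,
        div_le_iff₀ hden]
      exact key
    · -- upper bound
      have key : (1 - Real.sin x / x) * (1 + x^2/4) ≤ 2 * (x^2/4) := by
        have h1 : (1 - Real.sin x / x) * (1 + x^2/4) =
            ((x - Real.sin x) * (4 + x^2)) / (4 * x) := by
          have hs : Real.sin x / x * x = Real.sin x := div_mul_cancel₀ _ hx.ne'
          rw [eq_div_iff (by positivity : (4*x:ℝ) ≠ 0)]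
          linear_combination (-(4:ℝ) - x^2) * hs
        rw [h1, div_le_iff₀ (by positivity)]
        rcases le_or_gt x 3 with h3 | h3
        · have hsin := sinE x hx.le
          have h9 : (0:ℝ) ≤ 9 - x^2 := by nlinarith
          nlinarith [mul_nonneg (sub_nonneg.2 hsin) (by positivity : (0:ℝ) ≤ 4 + x^2),
            mul_nonneg (pow_nonneg hx.le 7) h9, mul_nonneg (pow_nonneg hx.le 3) h9,
            pow_nonneg hx.le 3, pow_nonneg hx.le 5, pow_nonneg hx.le 7]
        · have hs := Real.neg_one_le_sin x
          nlinarith [pow_pos hx 3, sq_nonneg x]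
      rw [show (2:ℝ) * (x^2/4/(1+x^2/4)) = (2*(x^2/4))/(1+x^2/4) by ring,
        le_div_iff₀ hden]
      exact key
end

section
/- Lower bound for the homogeneous WK transform on a truncated range: for 1 < α < 3, d = 3, and any 0 < k₁ < k₂, λ > 0, one has WK₃[k^{−α}·1_{[k₁,k₂]}](λ) ≥ (c₃⁻/2)·λ^{α−1}·( 2π^{α−1}/((3−α)(α−1)) − (π²/(3−α))(k₁λ)^{3−α} − (1/(α−1))(k₂λ)^{−(α−1)} ), where c₃⁻ = 2/3, using the kernel lower bound H₃(σ) ≥ c₃⁻ π²σ²/(1+π²σ²). -/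
open MeasureTheory Set Real

lemma sin_one_le_aux : Real.sin 1 ≤ 0.848 := by
  have h2 : Real.sin 1 = 2 * Real.sin (1/2) * Real.cos (1/2) := by
    rw [← Real.sin_two_mul]; norm_num
  have habs : |(1:ℝ)/2| ≤ 1 := abs_le.2 ⟨by norm_num, by norm_num⟩
  have hs := abs_sub_le_iff.1 (Real.sin_bound habs)
  have hc := abs_sub_le_iff.1 (Real.cos_bound habs)
  have hs' : Real.sin (1/2) ≤ 741/1536 := by
    have := hs.1; rw [abs_of_pos (by norm_num : (0:ℝ) < 1/2)] at this; norm_num at this ⊢; linarith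
  have hc' : Real.cos (1/2) ≤ 1349/1536 := by
    have := hc.1; rw [abs_of_pos (by norm_num : (0:ℝ) < 1/2)] at this; norm_num at this ⊢; linarith
  have hsn : 0 ≤ Real.sin (1/2) :=
    Real.sin_nonneg_of_nonneg_of_le_pi (by norm_num) (by linarith [Real.pi_gt_three])
  have hcn : 0 ≤ Real.cos (1/2) :=
    Real.cos_nonneg_of_mem_Icc ⟨by linarith [Real.pi_gt_three], by linarith [Real.pi_gt_three]⟩
  rw [h2]
  nlinarith [mul_le_mul hs' hc' hcn (by norm_num : (0:ℝ) ≤ 741/1536)]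

lemma sin_le_cubic_aux {t : ℝ} (ht : 0 < t) (ht2 : t ≤ 2) : Real.sin t ≤ t - t^3/12 := by
  rcases le_or_gt t 1 with h1 | h1
  · have habs : |t| ≤ 1 := abs_le.2 ⟨by linarith, h1⟩
    have hb := (abs_sub_le_iff.1 (Real.sin_bound habs)).1
    rw [abs_of_pos ht] at hb
    nlinarith [pow_le_pow_left₀ ht.le h1 4, pow_pos ht 3,
      mul_le_mul_of_nonneg_left (pow_le_pow_left₀ ht.le h1 2) (pow_pos ht 3).le]
  · rcases le_or_gt t 1.2 with h2 | h2
    · have hdiff : Real.sin t - Real.sin 1 ≤ t - 1 := by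
        rw [Real.sin_sub_sin]
        have hs : Real.sin ((t-1)/2) ≤ (t-1)/2 := Real.sin_le (by linarith)
        have hsn : 0 ≤ Real.sin ((t-1)/2) :=
          Real.sin_nonneg_of_nonneg_of_le_pi (by linarith) (by linarith [Real.pi_gt_three])
        have hcl := Real.cos_le_one ((t+1)/2)
        nlinarith
      nlinarith [sin_one_le_aux, pow_le_pow_left₀ ht.le h2 3]
    · have hsl := Real.sin_le_one t
      nlinarith [mul_nonneg (by linarith : (0:ℝ) ≤ t - 1.2) (by linarith : (0:ℝ) ≤ 2 - t),
        mul_nonneg (mul_nonneg (by linarith : (0:ℝ) ≤ t - 1.2)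
          (by linarith : (0:ℝ) ≤ t - 1.2)) (by linarith : (0:ℝ) ≤ 2 - t)]

lemma H3_ge_aux {σ : ℝ} (hσ : 0 < σ) : 1/3 * min (π^2 * σ^2) 1 ≤ H₃ σ := by
  have hπ := Real.pi_pos
  have ht : 0 < 2 * π * σ := by positivity
  rw [H₃, if_neg hσ.ne']
  set t := 2 * π * σ with htdef
  have hsq : π^2 * σ^2 = t^2/4 := by rw [htdef]; ring
  rw [hsq]
  rcases le_or_gt t 2 with h2 | h2
  · rw [min_eq_left (by nlinarith : t^2/4 ≤ 1)]
    have hcu := sin_le_cubic_aux ht h2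
    have : Real.sin t / t ≤ 1 - t^2/12 := by
      rw [div_le_iff₀ ht]; nlinarith
    linarith
  · have hmin : min (t^2/4) 1 ≤ 1 := min_le_right _ _
    have hsin : Real.sin t / t ≤ 1/2 := by
      rw [div_le_iff₀ ht]
      nlinarith [Real.sin_le_one t]
    linarith

lemma amgm_aux {α u : ℝ} (hα1 : 1 < α) (hα3 : α < 3) (hu : 0 < u) :
    2 / ((3-α)*(α-1)) ≤ u^(3-α)/(3-α) + u^(1-α)/(α-1) := by
  have ha : (0:ℝ) < 3 - α := by linarith
  have hb : (0:ℝ) < α - 1 := by linarith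
  have h := Real.geom_mean_le_arith_mean2_weighted
    (by positivity : (0:ℝ) ≤ (α-1)/2) (by positivity : (0:ℝ) ≤ (3-α)/2)
    (Real.rpow_nonneg hu.le (3-α)) (Real.rpow_nonneg hu.le (1-α))
    (by ring : (α-1)/2 + (3-α)/2 = 1)
  rw [← Real.rpow_mul hu.le, ← Real.rpow_mul hu.le, ← Real.rpow_add hu,
    show (3-α)*((α-1)/2) + (1-α)*((3-α)/2) = 0 by ring, Real.rpow_zero] at h
  rw [div_le_iff₀ (by positivity)]
  have expand : (u^(3-α)/(3-α) + u^(1-α)/(α-1)) * ((3-α)*(α-1))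
      = (α-1) * u^(3-α) + (3-α) * u^(1-α) := by field_simp
  rw [expand]; linarith

set_option maxHeartbeats 1000000 in
/-- Lower bound for the 3D Wiener–Khinchin transform of a power law truncated to
`[k₁, k₂]`, with `c₃⁻ = 2/3`. -/
theorem WK3_truncated_power_law_lower_bound (α k₁ k₂ : ℝ)
    (hα1 : 1 < α) (hα3 : α < 3) (hk₁ : 0 < k₁) (hk : k₁ < k₂) :
    ∀ l > (0:ℝ),
      ((2:ℝ)/3) / 2 * l ^ (α - 1) *
          (2 * π ^ (α - 1) / ((3 - α) * (α - 1))
            - (π ^ 2 / (3 - α)) * (k₁ * l) ^ (3 - α)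
            - (1 / (α - 1)) * (k₂ * l) ^ (-(α - 1)))
        ≤ ∫ k in Set.Icc k₁ k₂, H₃ (l * k) * k ^ (-α) := by
  intro l hl
  have hπ := Real.pi_pos
  have hk₂ : 0 < k₂ := hk₁.trans hk
  have ha : (0:ℝ) < 3 - α := by linarith
  have hb : (0:ℝ) < α - 1 := by linarith
  set k₀ : ℝ := 1/(π*l) with hk₀def
  have hk₀ : 0 < k₀ := by positivity
  set m : ℝ := max k₁ (min k₀ k₂) with hmdef
  have hk₁m : k₁ ≤ m := le_max_left _ _
  have hmk₂ : m ≤ k₂ := max_le hk.le (min_le_right _ _)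
  have hm0 : 0 < m := lt_of_lt_of_le hk₁ hk₁m
  set g : ℝ → ℝ := fun k => 1/3 * min (π^2 * (l*k)^2) 1 * k^(-α) with hgdef
  -- continuity of the integrands on [k₁, k₂] (indeed on any Icc with positive left end)
  have hrpow : ∀ a b : ℝ, 0 < a → ContinuousOn (fun k : ℝ => k ^ (-α)) (Icc a b) := by
    intro a b hapos
    intro x hx
    exact (Real.continuousAt_rpow_const x (-α)
      (Or.inl (ne_of_gt (lt_of_lt_of_le hapos hx.1)))).continuousWithinAt
  have hgcont : ∀ a b : ℝ, 0 < a → ContinuousOn g (Icc a b) := by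
    intro a b hapos
    apply ContinuousOn.mul
    · exact (continuous_const.mul ((continuous_const.mul
        ((continuous_const.mul continuous_id).pow 2)).min continuous_const)).continuousOn
    · exact hrpow a b hapos
  have hfcont : ContinuousOn (fun k => H₃ (l * k) * k ^ (-α)) (Icc k₁ k₂) := by
    apply ContinuousOn.mul
    · have hform : ContinuousOn
          (fun k : ℝ => 1 - Real.sin (2*π*(l*k)) / (2*π*(l*k))) (Icc k₁ k₂) := by
        apply ContinuousOn.sub continuousOn_const
        apply ContinuousOn.div
        · exact (Real.continuous_sin.comp (by continuity)).continuousOn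
        · exact (by continuity : Continuous fun k : ℝ => 2*π*(l*k)).continuousOn
        · intro x hx
          have hx0 : 0 < x := lt_of_lt_of_le hk₁ hx.1
          positivity
      apply hform.congr
      intro x hx
      have hx0 : 0 < x := lt_of_lt_of_le hk₁ hx.1
      have : l * x ≠ 0 := by positivity
      simp only [H₃, if_neg this]
    · exact hrpow k₁ k₂ hk₁
  have hgint : IntegrableOn g (Icc k₁ k₂) := (hgcont k₁ k₂ hk₁).integrableOn_Icc
  have hfint : IntegrableOn (fun k => H₃ (l * k) * k ^ (-α)) (Icc k₁ k₂) :=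
    hfcont.integrableOn_Icc
  -- Step 1: pointwise bound
  have step1 : ∫ k in Icc k₁ k₂, g k ≤ ∫ k in Icc k₁ k₂, H₃ (l * k) * k ^ (-α) := by
    apply setIntegral_mono_on hgint hfint measurableSet_Icc
    intro x hx
    have hx0 : 0 < x := lt_of_lt_of_le hk₁ hx.1
    have hlx : 0 < l * x := mul_pos hl hx0
    have h1 := H3_ge_aux hlx
    have h2 : π^2 * (l*x)^2 = π^2 * (l*x)^2 := rfl
    calc g x = (1/3 * min (π^2 * (l*x)^2) 1) * x^(-α) := rfl
      _ ≤ H₃ (l*x) * x^(-α) :=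
        mul_le_mul_of_nonneg_right h1 (Real.rpow_nonneg hx0.le _)
  -- Step 2: compute / bound the integral of g
  have hint1 : IntervalIntegrable g volume k₁ m := by
    apply ContinuousOn.intervalIntegrable
    rw [Set.uIcc_of_le hk₁m]
    exact hgcont k₁ m hk₁
  have hint2 : IntervalIntegrable g volume m k₂ := by
    apply ContinuousOn.intervalIntegrable
    rw [Set.uIcc_of_le hmk₂]
    exact hgcont m k₂ hm0
  have hIcc : ∫ k in Icc k₁ k₂, g k = (∫ k in k₁..m, g k) + ∫ k in m..k₂, g k := by
    rw [intervalIntegral.integral_add_adjacent_intervals hint1 hint2,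
      intervalIntegral.integral_of_le (le_of_lt hk), integral_Icc_eq_integral_Ioc]
  -- first piece
  have hp1 : ∫ k in k₁..m, g k = ∫ k in k₁..m, π^2*l^2/3 * k^(2-α) := by
    rw [intervalIntegral.integral_of_le hk₁m, intervalIntegral.integral_of_le hk₁m]
    apply setIntegral_congr_fun measurableSet_Ioc
    intro x hx
    have hx0 : 0 < x := hk₁.trans hx.1
    have hxk₀ : x ≤ k₀ := by
      rcases max_cases k₁ (min k₀ k₂) with ⟨he, _⟩ | ⟨he, hlt⟩
      · exfalso; rw [hmdef] at hx; rw [he] at hx; exact absurd hx.2 (not_le.2 hx.1)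
      · calc x ≤ m := hx.2
          _ = min k₀ k₂ := by rw [hmdef, he]
          _ ≤ k₀ := min_le_left _ _
    have hπlx : π * l * x ≤ 1 := by
      rw [hk₀def] at hxk₀
      rw [show π * l * x = x * (π*l) by ring]
      exact (le_div_iff₀ (by positivity)).1 (by simpa [one_div] using hxk₀)
    have hmin : min (π^2 * (l*x)^2) 1 = π^2 * (l*x)^2 := by
      apply min_eq_left
      nlinarith [mul_pos (mul_pos hπ hl) hx0]
    show g x = _
    rw [hgdef]
    simp only
    rw [hmin, show (2:ℝ) - α = 2 + (-α) by ring, Real.rpow_add hx0, Real.rpow_two]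
    ring
  have hv1 : ∫ k in k₁..m, π^2*l^2/3 * k^(2-α)
      = π^2*l^2/3 * ((m^(3-α) - k₁^(3-α))/(3-α)) := by
    rw [intervalIntegral.integral_const_mul,
      integral_rpow (Or.inl (by linarith : (-1:ℝ) < 2-α)),
      show (2:ℝ)-α+1 = 3-α by ring]
  -- second piece
  have hp2 : ∫ k in m..k₂, g k = ∫ k in m..k₂, 1/3 * k^(-α) := by
    rw [intervalIntegral.integral_of_le hmk₂, intervalIntegral.integral_of_le hmk₂]
    apply setIntegral_congr_fun measurableSet_Ioc
    intro x hx
    have hx0 : 0 < x := hm0.trans hx.1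
    have hk₀x : k₀ < x := by
      rcases le_or_gt k₂ k₀ with hc | hc
      · exfalso
        have : m = k₂ := by rw [hmdef, min_eq_right hc, max_eq_right hk.le]
        rw [this] at hx; exact absurd hx.2 (not_le.2 hx.1)
      · have : k₀ ≤ m := by
          rw [hmdef, min_eq_left hc.le]; exact le_max_right _ _
        exact lt_of_le_of_lt this hx.1
    have hπlx : 1 < π * l * x := by
      rw [hk₀def] at hk₀x
      have := (div_lt_iff₀ (by positivity : (0:ℝ) < π*l)).1 hk₀x
      calc (1:ℝ) = 1 := rfl
        _ < x * (π*l) := by simpa [one_div] using this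
        _ = π * l * x := by ring
    have hmin : min (π^2 * (l*x)^2) 1 = 1 := by
      apply min_eq_right
      nlinarith
    show g x = _
    rw [hgdef]
    simp only
    rw [hmin]
    ring
  have hv2 : ∫ k in m..k₂, 1/3 * k^(-α)
      = 1/3 * ((k₂^(1-α) - m^(1-α))/(1-α)) := by
    rw [intervalIntegral.integral_const_mul,
      integral_rpow (Or.inr ⟨by intro h; rw [neg_eq_iff_eq_neg] at h; linarith,
        by rw [Set.uIcc_of_le hmk₂]; exact fun h => absurd h.1 (not_le.2 hm0)⟩),
      show -α+1 = 1-α by ring]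
  -- key AM-GM bound at m
  have key : 2*(π*l)^(α-1) / ((3-α)*(α-1))
      ≤ π^2*l^2 * m^(3-α)/(3-α) + m^(1-α)/(α-1) := by
    have hamgm := amgm_aux hα1 hα3 (mul_pos (mul_pos hπ hl) hm0)
    have hmul := mul_le_mul_of_nonneg_left hamgm
      (Real.rpow_nonneg (by positivity : (0:ℝ) ≤ π*l) (α-1))
    have e1 : (π*l*m)^(3-α) = (π*l)^(3-α) * m^(3-α) :=
      Real.mul_rpow (by positivity) hm0.le
    have e2 : (π*l*m)^(1-α) = (π*l)^(1-α) * m^(1-α) :=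
      Real.mul_rpow (by positivity) hm0.le
    have e3 : (π*l)^(α-1) * (π*l)^(3-α) = π^2*l^2 := by
      rw [← Real.rpow_add (by positivity), show α-1+(3-α) = (2:ℝ) by ring, Real.rpow_two]
      ring
    have e4 : (π*l)^(α-1) * (π*l)^(1-α) = 1 := by
      rw [← Real.rpow_add (by positivity), show α-1+(1-α) = (0:ℝ) by ring, Real.rpow_zero]
    rw [e1, e2] at hmul
    calc 2*(π*l)^(α-1) / ((3-α)*(α-1))
        = (π*l)^(α-1) * (2 / ((3-α)*(α-1))) := by ring
      _ ≤ (π*l)^(α-1) * ((π*l)^(3-α) * m^(3-α)/(3-α) + (π*l)^(1-α) * m^(1-α)/(α-1)) := hmul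
      _ = ((π*l)^(α-1) * (π*l)^(3-α)) * m^(3-α)/(3-α)
          + ((π*l)^(α-1) * (π*l)^(1-α)) * m^(1-α)/(α-1) := by ring
      _ = π^2*l^2 * m^(3-α)/(3-α) + m^(1-α)/(α-1) := by rw [e3, e4]; ring
  -- rewriting the target
  have t1 : l^(α-1) * (k₁*l)^(3-α) = k₁^(3-α) * l^2 := by
    rw [Real.mul_rpow hk₁.le hl.le, ← mul_assoc, mul_comm (l^(α-1)),
      mul_assoc, ← Real.rpow_add hl, show α-1+(3-α) = (2:ℝ) by ring, Real.rpow_two]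
  have t2 : l^(α-1) * (k₂*l)^(-(α-1)) = k₂^(1-α) := by
    rw [show -(α-1) = 1-α by ring, Real.mul_rpow hk₂.le hl.le, ← mul_assoc,
      mul_comm (l^(α-1)), mul_assoc, ← Real.rpow_add hl,
      show α-1+(1-α) = (0:ℝ) by ring, Real.rpow_zero, mul_one]
  have t3 : l^(α-1) * π^(α-1) = (π*l)^(α-1) := by
    rw [Real.mul_rpow hπ.le hl.le, mul_comm]
  have hT : ((2:ℝ)/3) / 2 * l ^ (α - 1) *
          (2 * π ^ (α - 1) / ((3 - α) * (α - 1))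
            - (π ^ 2 / (3 - α)) * (k₁ * l) ^ (3 - α)
            - (1 / (α - 1)) * (k₂ * l) ^ (-(α - 1)))
      = 1/3 * (2*(π*l)^(α-1) / ((3-α)*(α-1)))
        - π^2*l^2/3 * (k₁^(3-α)/(3-α)) - 1/3 * (k₂^(1-α)/(α-1)) := by
    linear_combination (2/((3-α)*(α-1))/3) * t3
      + (-(π^2/(3-α))/3) * t1 + (-(1/(α-1))/3) * t2
  -- put everything together
  have final : ((2:ℝ)/3) / 2 * l ^ (α - 1) *
          (2 * π ^ (α - 1) / ((3 - α) * (α - 1))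
            - (π ^ 2 / (3 - α)) * (k₁ * l) ^ (3 - α)
            - (1 / (α - 1)) * (k₂ * l) ^ (-(α - 1)))
      ≤ ∫ k in Icc k₁ k₂, g k := by
    rw [hT, hIcc, hp1, hv1, hp2, hv2]
    have flip : (k₂^(1-α) - m^(1-α))/(1-α) = (m^(1-α) - k₂^(1-α))/(α-1) := by
      rw [div_eq_div_iff (by linarith) (by linarith)]; ring
    rw [flip]
    have expand : π^2*l^2/3 * ((m^(3-α) - k₁^(3-α))/(3-α)) + 1/3 * ((m^(1-α) - k₂^(1-α))/(α-1))
        = 1/3 * (π^2*l^2 * m^(3-α)/(3-α) + m^(1-α)/(α-1))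
          - π^2*l^2/3 * (k₁^(3-α)/(3-α)) - 1/3 * (k₂^(1-α)/(α-1)) := by
      ring
    rw [expand]
    have : 1/3 * (2*(π*l)^(α-1) / ((3-α)*(α-1)))
        ≤ 1/3 * (π^2*l^2 * m^(3-α)/(3-α) + m^(1-α)/(α-1)) := by linarith
    linarith
  exact final.trans step1
end

section
/- Incompatibility of the two threshold scales: suppose δ, η > 0 satisfy (1/4)·δ⁴·η^{−(d−1)/2} < 1, f is positive and integrable on (0,∞), K♯ satisfies K²∫_K^∞ f ≤ (δ⁴/2)∫₀^K k²f(k)dk for all K ≥ K♯, and K♭ satisfies ∫₀^K f ≤ (1/2)η^{−(d−1)/2}∫_K^∞ f for all K ≤ K♭. Then K♭ < K♯. -/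
open MeasureTheory Set Real

/-- Incompatibility of the two threshold scales `K♭` and `K♯`. -/
theorem Kflat_lt_Ksharp (d : ℕ) (hd : 1 ≤ d) (δ η : ℝ) (hδ : 0 < δ) (hη : 0 < η)
    (hsmall : (1/4) * δ ^ 4 * η ^ (-(((d : ℝ) - 1) / 2)) < 1)
    (f : ℝ → ℝ) (hfpos : ∀ k > (0:ℝ), 0 < f k) (hfint : IntegrableOn f (Set.Ioi 0))
    (Ksharp Kflat : ℝ) (hKsharp_pos : 0 < Ksharp) (hKflat_pos : 0 < Kflat)
    (hsharp : ∀ K ≥ Ksharp,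
      K ^ 2 * ∫ k in Set.Ioi K, f k ≤ (δ ^ 4 / 2) * ∫ k in Set.Ioc (0:ℝ) K, k ^ 2 * f k)
    (hflat : ∀ K, 0 < K → K ≤ Kflat →
      (∫ k in Set.Ioc (0:ℝ) K, f k)
        ≤ (1/2) * η ^ (-(((d : ℝ) - 1) / 2)) * ∫ k in Set.Ioi K, f k) :
    Kflat < Ksharp := by
  by_contra hcon
  push_neg at hcon
  set A := η ^ (-(((d : ℝ) - 1) / 2)) with hAdef
  have hA : 0 < A := Real.rpow_pos_of_pos hη _
  set K := Kflat
  have h1 := hsharp K hcon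
  have h2 := hflat K hKflat_pos le_rfl
  have hintK : IntegrableOn f (Ioi K) :=
    hfint.mono_set (Ioi_subset_Ioi hKflat_pos.le)
  have hintK0 : IntegrableOn f (Ioc 0 K) :=
    hfint.mono_set Ioc_subset_Ioi_self
  have hg : IntegrableOn (fun k => k ^ 2 * f k) (Ioc 0 K) := by
    apply Integrable.mono (hintK0.const_mul (K ^ 2))
    · exact ((continuous_pow 2).aestronglyMeasurable.mul hintK0.aestronglyMeasurable)
    · filter_upwards [ae_restrict_mem measurableSet_Ioc] with k hk
      have hkpos : 0 < k := hk.1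
      have hfk : 0 < f k := hfpos k hkpos
      have hk2 : k ^ 2 ≤ K ^ 2 := by nlinarith [hk.2]
      simp only [Real.norm_eq_abs]
      rw [abs_of_nonneg (by positivity), abs_of_nonneg (by positivity)]
      nlinarith
  have hmono : (∫ k in Ioc (0:ℝ) K, k ^ 2 * f k) ≤ K ^ 2 * ∫ k in Ioc (0:ℝ) K, f k := by
    rw [← integral_const_mul]
    apply setIntegral_mono_on hg (hintK0.const_mul _) measurableSet_Ioc
    intro k hk
    have hfk : 0 < f k := hfpos k hk.1
    have hk2 : k ^ 2 ≤ K ^ 2 := by nlinarith [hk.1, hk.2]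
    nlinarith
  have hIpos : 0 < ∫ k in Ioi K, f k := by
    have hnn : 0 ≤ᵐ[volume.restrict (Ioi K)] f := by
      filter_upwards [ae_restrict_mem measurableSet_Ioi] with k hk
      exact (hfpos k (hKflat_pos.trans hk)).le
    rw [setIntegral_pos_iff_support_of_nonneg_ae hnn hintK]
    have hsub : Ioi K ⊆ Function.support f ∩ Ioi K := fun k hk =>
      ⟨(hfpos k (hKflat_pos.trans hk)).ne', hk⟩
    calc (0:ENNReal) < volume (Ioi K) := by simp
    _ ≤ _ := measure_mono hsub
  have hK2 : (0:ℝ) < K ^ 2 := by positivity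
  nlinarith [mul_le_mul_of_nonneg_left hmono (by positivity : (0:ℝ) ≤ δ ^ 4 / 2),
    mul_le_mul_of_nonneg_left h2 (by positivity : (0:ℝ) ≤ δ ^ 4 / 2 * K ^ 2),
    mul_lt_mul_of_pos_right hsmall (mul_pos hK2 hIpos)]
end
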